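/- arXiv:1203.4130 — 5 statements merged into one kernel-verified Lean document; each statement's English description precedes it below -/
import Mathlib

section
/- The function S(s,t) = |s^{1/p} - t^{1/p}|^p is convex on the open quadrant {(s,t) : s > 0, t > 0}, for any real p > 1. -/
/-- Reverse Minkowski inequality in `ℓ^p(Fin 2)`, raised to the `p`-th power. -/
lemma key0 (p : ℝ) (hp : 1 < p) {a b c d : ℝ} (ha : 0 ≤ a) (hb : 0 ≤ b)
    (hc : 0 ≤ c) (hd : 0 ≤ d) :
    |(a ^ p + b ^ p) ^ (1 / p) - (c ^ p + d ^ p) ^ (1 / p)| ^ p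
      ≤ |a - c| ^ p + |b - d| ^ p := by
  have hp0 : (0:ℝ) < p := lt_trans one_pos hp
  haveI : Fact (1 ≤ ENNReal.ofReal p) := ⟨ENNReal.one_le_ofReal.mpr hp.le⟩
  have htr : (ENNReal.ofReal p).toReal = p := ENNReal.toReal_ofReal hp0.le
  have htr' : (0:ℝ) < (ENNReal.ofReal p).toReal := by rw [htr]; exact hp0
  set A : PiLp (ENNReal.ofReal p) (fun _ : Fin 2 => ℝ) :=
    (WithLp.equiv _ _).symm ![a, b] with hA
  set B : PiLp (ENNReal.ofReal p) (fun _ : Fin 2 => ℝ) :=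
    (WithLp.equiv _ _).symm ![c, d] with hB
  have hnorm : ∀ x y : ℝ, (0:ℝ) ≤ x → 0 ≤ y →
      ‖((WithLp.equiv _ _).symm ![x, y] : PiLp (ENNReal.ofReal p) (fun _ : Fin 2 => ℝ))‖
        = (x ^ p + y ^ p) ^ (1/p) := by
    intro x y hx hy
    rw [PiLp.norm_eq_sum htr']
    simp [htr, Fin.sum_univ_two, abs_of_nonneg hx, abs_of_nonneg hy]
  have h1 : |‖A‖ - ‖B‖| ≤ ‖A - B‖ := abs_norm_sub_norm_le A B
  have hABeq : A - B = (WithLp.equiv _ _).symm ![a - c, b - d] := by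
    apply (WithLp.equiv _ _).injective
    funext i; fin_cases i <;> simp [hA, hB]
  have hAB : ‖A - B‖ = (|a - c| ^ p + |b - d| ^ p) ^ (1/p) := by
    rw [hABeq, PiLp.norm_eq_sum htr']
    simp [htr, Fin.sum_univ_two, abs_abs, Real.abs_rpow_of_nonneg]
  rw [hnorm a b ha hb, hnorm c d hc hd, hAB] at h1
  calc |(a ^ p + b ^ p) ^ (1 / p) - (c ^ p + d ^ p) ^ (1 / p)| ^ p
      ≤ ((|a - c| ^ p + |b - d| ^ p) ^ (1/p)) ^ p :=
        Real.rpow_le_rpow (abs_nonneg _) h1 hp0.le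
    _ = |a - c| ^ p + |b - d| ^ p := by
        rw [← Real.rpow_mul (by positivity), one_div_mul_cancel hp0.ne', Real.rpow_one]

/-- `S` is positively 1-homogeneous. -/
lemma key_hom (p : ℝ) (hp : 1 < p) {c s t : ℝ} (hc : 0 ≤ c) (hs : 0 ≤ s) (ht : 0 ≤ t) :
    |(c * s) ^ (1 / p) - (c * t) ^ (1 / p)| ^ p = c * |s ^ (1 / p) - t ^ (1 / p)| ^ p := by
  have hp0 : (0:ℝ) < p := lt_trans one_pos hp
  rw [Real.mul_rpow hc hs, Real.mul_rpow hc ht, ← mul_sub, abs_mul,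
    Real.mul_rpow (abs_nonneg _) (abs_nonneg _),
    abs_of_nonneg (Real.rpow_nonneg hc _),
    ← Real.rpow_mul hc, one_div_mul_cancel hp0.ne', Real.rpow_one]

/-- `S` is subadditive. -/
lemma key_sub (p : ℝ) (hp : 1 < p) {s1 t1 s2 t2 : ℝ} (hs1 : 0 ≤ s1) (ht1 : 0 ≤ t1)
    (hs2 : 0 ≤ s2) (ht2 : 0 ≤ t2) :
    |(s1 + s2) ^ (1 / p) - (t1 + t2) ^ (1 / p)| ^ p
      ≤ |s1 ^ (1 / p) - t1 ^ (1 / p)| ^ p + |s2 ^ (1 / p) - t2 ^ (1 / p)| ^ p := by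
  have hp0 : (0:ℝ) < p := lt_trans one_pos hp
  have h := key0 p hp (a := s1 ^ (1/p)) (b := s2 ^ (1/p)) (c := t1 ^ (1/p)) (d := t2 ^ (1/p))
    (Real.rpow_nonneg hs1 _) (Real.rpow_nonneg hs2 _)
    (Real.rpow_nonneg ht1 _) (Real.rpow_nonneg ht2 _)
  have e : ∀ x : ℝ, 0 ≤ x → (x ^ (1/p)) ^ p = x := by
    intro x hx
    rw [← Real.rpow_mul hx, one_div_mul_cancel hp0.ne', Real.rpow_one]
  rwa [e s1 hs1, e s2 hs2, e t1 ht1, e t2 ht2] at h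

/-- The function `S(s,t) = |s^(1/p) - t^(1/p)|^p` is convex on the open quadrant
`{(s,t) : s > 0, t > 0}`, for any real `p > 1`. -/
theorem stmt_0 (p : ℝ) (hp : 1 < p) :
    ConvexOn ℝ (Set.Ioi (0 : ℝ) ×ˢ Set.Ioi (0 : ℝ))
      (fun st : ℝ × ℝ => |st.1 ^ (1 / p) - st.2 ^ (1 / p)| ^ p) := by
  refine ⟨(convex_Ioi 0).prod (convex_Ioi 0), ?_⟩
  rintro ⟨s1, t1⟩ ⟨hs1, ht1⟩ ⟨s2, t2⟩ ⟨hs2, ht2⟩ a b ha hb hab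
  simp only [Prod.smul_mk, Prod.mk_add_mk, smul_eq_mul, Set.mem_Ioi, Set.mem_prod] at *
  calc |(a * s1 + b * s2) ^ (1/p) - (a * t1 + b * t2) ^ (1/p)| ^ p
      ≤ |(a * s1) ^ (1/p) - (a * t1) ^ (1/p)| ^ p
        + |(b * s2) ^ (1/p) - (b * t2) ^ (1/p)| ^ p :=
        key_sub p hp (by positivity) (by positivity) (by positivity) (by positivity)
    _ = a * |s1 ^ (1/p) - t1 ^ (1/p)| ^ p + b * |s2 ^ (1/p) - t2 ^ (1/p)| ^ p := by
        rw [key_hom p hp ha hs1.le ht1.le, key_hom p hp hb hs2.le ht2.le]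
end

section
/- If p > 1 and u, v are real-valued functions with w = ((u^p + v^p)/2)^{1/p} (where u, v ≥ 0), then for all x, y: |w(y) - w(x)|^p ≤ (1/2)|u(y) - u(x)|^p + (1/2)|v(y) - v(x)|^p. -/
/-- Two-point Minkowski inequality. -/
lemma minkowski_two (p : ℝ) (hp : 1 ≤ p) {a b c d : ℝ} (ha : 0 ≤ a) (hb : 0 ≤ b)
    (hc : 0 ≤ c) (hd : 0 ≤ d) :
    ((a + b) ^ p + (c + d) ^ p) ^ (1 / p) ≤ (a ^ p + c ^ p) ^ (1 / p) + (b ^ p + d ^ p) ^ (1 / p) := by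
  have := Real.Lp_add_le_of_nonneg (s := (Finset.univ : Finset (Fin 2)))
    (f := ![a, c]) (g := ![b, d]) (p := p) hp
    (by intro i _; fin_cases i <;> simpa) (by intro i _; fin_cases i <;> simpa)
  simpa [Fin.sum_univ_two] using this

lemma key_ineq {X : Type*} (p : ℝ) (hp : 1 < p) (u v : X → ℝ)
    (hu : ∀ x, 0 ≤ u x) (hv : ∀ x, 0 ≤ v x)
    (w : X → ℝ) (hw : w = fun x => ((u x ^ p + v x ^ p) / 2) ^ (1 / p)) :
    ∀ x y, w y - w x ≤ ((|u y - u x| ^ p + |v y - v x| ^ p) / 2) ^ (1 / p) := by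
  intro x y
  have hp1 : (1:ℝ) ≤ p := hp.le
  have hp0 : 0 < p := lt_trans one_pos hp
  have h2 : (0:ℝ) < 1/2 := by norm_num
  set a := |u y - u x| with ha
  set b := |v y - v x| with hb
  have ha0 : 0 ≤ a := abs_nonneg _
  have hb0 : 0 ≤ b := abs_nonneg _
  have huy : u y ≤ u x + a := by
    have := le_abs_self (u y - u x); linarith
  have hvy : v y ≤ v x + b := by
    have := le_abs_self (v y - v x); linarith
  have step1 : w y ≤ ((u x + a) ^ p + (v x + b) ^ p) ^ (1 / p) * (1/2 : ℝ) ^ (1/p) := by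
    rw [hw]
    simp only
    rw [div_eq_mul_inv, ← Real.mul_rpow (add_nonneg (Real.rpow_nonneg (add_nonneg (hu x) ha0) p) (Real.rpow_nonneg (add_nonneg (hv x) hb0) p)) (by norm_num)]
    apply Real.rpow_le_rpow (mul_nonneg (add_nonneg (Real.rpow_nonneg (hu y) p) (Real.rpow_nonneg (hv y) p)) (by norm_num))
    · have h1 : u y ^ p ≤ (u x + a) ^ p := Real.rpow_le_rpow (hu y) huy hp0.le
      have h2 : v y ^ p ≤ (v x + b) ^ p := Real.rpow_le_rpow (hv y) hvy hp0.le
      have : (2:ℝ)⁻¹ = 1/2 := by norm_num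
      rw [this]; nlinarith
    · positivity
  have step2 : ((u x + a) ^ p + (v x + b) ^ p) ^ (1 / p) ≤
      (u x ^ p + v x ^ p) ^ (1 / p) + (a ^ p + b ^ p) ^ (1 / p) :=
    minkowski_two p hp1 (hu x) ha0 (hv x) hb0
  have half0 : (0:ℝ) ≤ (1/2 : ℝ) ^ (1/p) := by positivity
  have hfinal : w y ≤ w x + ((a ^ p + b ^ p) / 2) ^ (1 / p) := calc
    w y ≤ ((u x + a) ^ p + (v x + b) ^ p) ^ (1 / p) * (1/2 : ℝ) ^ (1/p) := step1
    _ ≤ ((u x ^ p + v x ^ p) ^ (1 / p) + (a ^ p + b ^ p) ^ (1 / p)) * (1/2 : ℝ) ^ (1/p) :=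
        mul_le_mul_of_nonneg_right step2 half0
    _ = w x + ((a ^ p + b ^ p) / 2) ^ (1 / p) := by
        rw [hw]
        simp only
        rw [Real.div_rpow (add_nonneg (Real.rpow_nonneg (hu x) p) (Real.rpow_nonneg (hv x) p)) (by norm_num),
          Real.div_rpow (add_nonneg (Real.rpow_nonneg ha0 p) (Real.rpow_nonneg hb0 p)) (by norm_num),
          one_div (2:ℝ), Real.inv_rpow (by norm_num)]
        ring
  linarith

/-- If `p > 1` and `u, v ≥ 0` with `w = ((u^p + v^p)/2)^(1/p)`, then for all `x, y`:
`|w(y) - w(x)|^p ≤ (1/2)|u(y) - u(x)|^p + (1/2)|v(y) - v(x)|^p`. -/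
theorem stmt_1 {X : Type*} (p : ℝ) (hp : 1 < p) (u v : X → ℝ)
    (hu : ∀ x, 0 ≤ u x) (hv : ∀ x, 0 ≤ v x)
    (w : X → ℝ) (hw : w = fun x => ((u x ^ p + v x ^ p) / 2) ^ (1 / p)) :
    ∀ x y, |w y - w x| ^ p ≤ (1 / 2) * |u y - u x| ^ p + (1 / 2) * |v y - v x| ^ p := by
  intro x y
  have hp0 : 0 < p := lt_trans one_pos hp
  set a := |u y - u x| with ha
  set b := |v y - v x| with hb
  have ha0 : 0 ≤ a := abs_nonneg _
  have hb0 : 0 ≤ b := abs_nonneg _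
  have h1 := key_ineq p hp u v hu hv w hw x y
  have h2 := key_ineq p hp u v hu hv w hw y x
  rw [abs_sub_comm (u x) (u y), abs_sub_comm (v x) (v y)] at h2
  have habs : |w y - w x| ≤ ((a ^ p + b ^ p) / 2) ^ (1 / p) := abs_sub_le_iff.mpr ⟨h1, h2⟩
  have hM0 : (0:ℝ) ≤ ((a ^ p + b ^ p) / 2) ^ (1 / p) := by positivity
  calc |w y - w x| ^ p ≤ (((a ^ p + b ^ p) / 2) ^ (1 / p)) ^ p :=
        Real.rpow_le_rpow (abs_nonneg _) habs hp0.le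
    _ = (a ^ p + b ^ p) / 2 := by
        rw [← Real.rpow_mul (by positivity), one_div, inv_mul_cancel₀ hp0.ne', Real.rpow_one]
    _ = (1/2) * a ^ p + (1/2) * b ^ p := by ring
end

section
/- For p > 1 and nonnegative reals s₁,t₁,s₂,t₂ > 0, equality |((s₁+s₂)/2)^{1/p} - ((t₁+t₂)/2)^{1/p}|^p = (1/2)|s₁^{1/p}-t₁^{1/p}|^p + (1/2)|s₂^{1/p}-t₂^{1/p}|^p holds only if s₁t₂ = s₂t₁. -/
/-!
`S(s, t) = |s^(1/p) - t^(1/p)|^p` is positively homogeneous of degree one, so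
`S(s, t) = t g(s/t)` with `g(x) = |x^(1/p) - 1|^p`: `S` is the perspective of `g`.
The derivative of `g` is `sign(u) |u|^(p-1)` at `u = 1 - x^(-1/p)`, which is strictly increasing
in `x`, so `g` is strictly convex and its perspective is strictly subadditive unless
`s₁/t₁ = s₂/t₂`. By homogeneity, equality in midpoint convexity is equality in
subadditivity.
-/

open Set

noncomputable def signedRpow (r u : ℝ) : ℝ := |u| ^ (r - 1) * u

theorem signedRpow_of_nonneg {r u : ℝ} (hr : 0 < r) (hu : 0 ≤ u) : signedRpow r u = u ^ r := by
  rcases hu.eq_or_lt with rfl | hu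
  · simp [signedRpow, Real.zero_rpow hr.ne']
  · rw [signedRpow, abs_of_pos hu, ← Real.rpow_add_one hu.ne', sub_add_cancel]

theorem signedRpow_neg (r u : ℝ) : signedRpow r (-u) = -signedRpow r u := by
  simp [signedRpow]

theorem strictMono_signedRpow {r : ℝ} (hr : 0 < r) : StrictMono (signedRpow r) :=
  strictMono_of_odd_strictMonoOn_nonneg (signedRpow_neg r) fun u hu v hv huv => by
    rw [signedRpow_of_nonneg hr hu, signedRpow_of_nonneg hr hv]
    exact Real.rpow_lt_rpow hu huv hr

theorem signedRpow_mul {r c : ℝ} (u : ℝ) (hc : 0 < c) :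
    signedRpow r (u * c) = signedRpow r u * c ^ r := by
  rw [signedRpow, signedRpow, abs_mul, abs_of_pos hc, Real.mul_rpow (abs_nonneg u) hc.le,
    Real.rpow_sub_one hc.ne']
  field_simp

theorem hasDerivAt_abs_rpow_eq_signedRpow (u : ℝ) {p : ℝ} (hp : 1 < p) :
    HasDerivAt (fun u : ℝ ↦ |u| ^ p) (p * signedRpow (p - 1) u) u := by
  convert hasDerivAt_abs_rpow u hp using 1
  rw [signedRpow, sub_sub, one_add_one_eq_two, mul_assoc]

noncomputable def rootDiffPow (p s t : ℝ) : ℝ := |s ^ (1 / p) - t ^ (1 / p)| ^ p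

theorem rootDiffPow_mul {p c s t : ℝ} (hp : p ≠ 0) (hc : 0 ≤ c) (hs : 0 ≤ s) (ht : 0 ≤ t) :
    rootDiffPow p (c * s) (c * t) = c * rootDiffPow p s t := by
  rw [rootDiffPow, rootDiffPow, Real.mul_rpow hc hs, Real.mul_rpow hc ht, ← mul_sub, abs_mul,
    abs_of_nonneg (by positivity), Real.mul_rpow (by positivity) (abs_nonneg _), one_div,
    Real.rpow_inv_rpow hc hp]

theorem rootDiffPow_eq_mul_rootDiffPow_div {p s t : ℝ} (hp : p ≠ 0) (hs : 0 ≤ s) (ht : 0 < t) :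
    rootDiffPow p s t = t * rootDiffPow p (s / t) 1 := by
  rw [← rootDiffPow_mul hp ht.le (by positivity) zero_le_one, mul_div_cancel₀ s ht.ne', mul_one]

theorem hasDerivAt_rootDiffPow_one {p x : ℝ} (hp : 1 < p) (hx : 0 < x) :
    HasDerivAt (fun y ↦ rootDiffPow p y 1) (signedRpow (p - 1) (1 - (x ^ (1 / p))⁻¹)) x := by
  have hp0 : p ≠ 0 := by positivity
  set y := x ^ (1 / p) with hy
  have hy0 : 0 < y := by positivity
  have h := (hasDerivAt_abs_rpow_eq_signedRpow (y - 1) hp).comp x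
    ((Real.hasDerivAt_rpow_const (p := 1 / p) (Or.inl hx.ne')).sub_const 1)
  simp only [rootDiffPow, Real.one_rpow]
  refine h.congr_deriv ?_
  have hxy : x = y ^ p := by rw [hy, one_div, Real.rpow_inv_rpow hx.le hp0]
  -- the factor `y / x = y ^ (1 - p)` is absorbed by the homogeneity of `signedRpow (p - 1)`
  have hsplit : 1 - y⁻¹ = (y - 1) * y⁻¹ := by field_simp
  rw [hsplit, signedRpow_mul _ (inv_pos.2 hy0), Real.rpow_sub_one hx.ne', ← hy, hxy,
    Real.inv_rpow hy0.le, Real.rpow_sub_one hy0.ne']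
  field_simp

theorem strictConvexOn_rootDiffPow_one {p : ℝ} (hp : 1 < p) :
    StrictConvexOn ℝ (Ioi 0) (fun x ↦ rootDiffPow p x 1) := by
  refine StrictMonoOn.strictConvexOn_of_deriv (convex_Ioi 0)
    (fun x hx ↦ (hasDerivAt_rootDiffPow_one hp hx).continuousAt.continuousWithinAt) ?_
  rw [interior_Ioi]
  intro x hx y hy hxy
  rw [(hasDerivAt_rootDiffPow_one hp hx).deriv, (hasDerivAt_rootDiffPow_one hp hy).deriv]
  have hq : (0 : ℝ) < 1 / p := by positivity
  refine strictMono_signedRpow (by linarith) (sub_lt_sub_left ?_ 1)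
  exact inv_strictAnti₀ (Real.rpow_pos_of_pos hx _) (Real.rpow_lt_rpow hx.le hxy hq)

theorem StrictConvexOn.perspective_add_lt {D : Set ℝ} {f : ℝ → ℝ} (hf : StrictConvexOn ℝ D f)
    {s₁ s₂ t₁ t₂ : ℝ} (ht₁ : 0 < t₁) (ht₂ : 0 < t₂) (h₁ : s₁ / t₁ ∈ D) (h₂ : s₂ / t₂ ∈ D)
    (hne : s₁ / t₁ ≠ s₂ / t₂) :
    (t₁ + t₂) * f ((s₁ + s₂) / (t₁ + t₂)) < t₁ * f (s₁ / t₁) + t₂ * f (s₂ / t₂) := by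
  have ht : 0 < t₁ + t₂ := add_pos ht₁ ht₂
  have hab : t₁ / (t₁ + t₂) + t₂ / (t₁ + t₂) = 1 := by field_simp
  have key := hf.2 h₁ h₂ hne (div_pos ht₁ ht) (div_pos ht₂ ht) hab
  have hmix : (t₁ / (t₁ + t₂)) • (s₁ / t₁) + (t₂ / (t₁ + t₂)) • (s₂ / t₂) =
      (s₁ + s₂) / (t₁ + t₂) := by
    simp only [smul_eq_mul]; field_simp
  rw [hmix, smul_eq_mul, smul_eq_mul] at key
  calc (t₁ + t₂) * f ((s₁ + s₂) / (t₁ + t₂))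
      < (t₁ + t₂) * (t₁ / (t₁ + t₂) * f (s₁ / t₁) + t₂ / (t₁ + t₂) * f (s₂ / t₂)) :=
        mul_lt_mul_of_pos_left key ht
    _ = t₁ * f (s₁ / t₁) + t₂ * f (s₂ / t₂) := by field_simp

theorem rootDiffPow_add_lt {p s₁ t₁ s₂ t₂ : ℝ} (hp : 1 < p) (hs₁ : 0 < s₁) (ht₁ : 0 < t₁)
    (hs₂ : 0 < s₂) (ht₂ : 0 < t₂) (hne : s₁ * t₂ ≠ s₂ * t₁) :
    rootDiffPow p (s₁ + s₂) (t₁ + t₂) < rootDiffPow p s₁ t₁ + rootDiffPow p s₂ t₂ := by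
  have hp0 : p ≠ 0 := by positivity
  rw [rootDiffPow_eq_mul_rootDiffPow_div hp0 hs₁.le ht₁,
    rootDiffPow_eq_mul_rootDiffPow_div hp0 hs₂.le ht₂,
    rootDiffPow_eq_mul_rootDiffPow_div hp0 (by positivity) (by positivity)]
  exact (strictConvexOn_rootDiffPow_one hp).perspective_add_lt ht₁ ht₂ (div_pos hs₁ ht₁)
    (div_pos hs₂ ht₂) fun h ↦ hne ((div_eq_div_iff ht₁.ne' ht₂.ne').1 h)

/-- For `p > 1` and positive reals `s₁, t₁, s₂, t₂`, equality in the midpoint convexity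
inequality for `S(s,t) = |s^(1/p) - t^(1/p)|^p` holds only if `s₁ t₂ = s₂ t₁`. -/
theorem stmt_2 (p : ℝ) (hp : 1 < p) (s₁ t₁ s₂ t₂ : ℝ)
    (hs₁ : 0 < s₁) (ht₁ : 0 < t₁) (hs₂ : 0 < s₂) (ht₂ : 0 < t₂)
    (heq : |((s₁ + s₂) / 2) ^ (1 / p) - ((t₁ + t₂) / 2) ^ (1 / p)| ^ p =
      (1 / 2) * |s₁ ^ (1 / p) - t₁ ^ (1 / p)| ^ p +
      (1 / 2) * |s₂ ^ (1 / p) - t₂ ^ (1 / p)| ^ p) :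
    s₁ * t₂ = s₂ * t₁ := by
  have hmid : rootDiffPow p ((s₁ + s₂) / 2) ((t₁ + t₂) / 2) =
      1 / 2 * rootDiffPow p (s₁ + s₂) (t₁ + t₂) := by
    rw [div_eq_inv_mul, div_eq_inv_mul, rootDiffPow_mul (by positivity) (by norm_num)
      (by positivity) (by positivity), one_div]
  have heq' : rootDiffPow p ((s₁ + s₂) / 2) ((t₁ + t₂) / 2) =
      1 / 2 * rootDiffPow p s₁ t₁ + 1 / 2 * rootDiffPow p s₂ t₂ := heq
  by_contra hne
  have hlt := rootDiffPow_add_lt hp hs₁ ht₁ hs₂ ht₂ hne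
  linarith
end

section
/- Let 0 < α < 1, x₀ ∈ ℝⁿ, R > 0, and define the truncated α-cone C(x) = min(|x - x₀|^α, R^α). Then for every x ∈ B(x₀,R) \ {x₀}: (i) inf_{y∈ℝⁿ, y≠x} (C(y) - C(x))/|y - x|^α ≤ -1, and (ii) sup_{y∈ℝⁿ, y≠x} (C(y) - C(x))/|y - x|^α < 1; hence the sum of the sup and the inf is strictly negative. -/
/-!
Write `r = |x - x₀|` and `d = |y - x|`. Since `t ↦ t^α` is subadditive on `[0, ∞)`, the truncated
cone is `α`-Hölder with constant `1`, so every quotient is at least `-1`, and `y = x₀` attains `-1`.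
For the upper bound, `C(y) ≤ min((r + d)^α, R^α)`. By concavity of `t ↦ t^α` and homogeneity,
`((r + d)^α - r^α) / d^α` increases with `d`, so every quotient is at most its value at `d = R - r`,
namely `K = (R^α - r^α) / (R - r)^α`, and `K < 1` by strict subadditivity.
-/

open Set

theorem ConcaveOn.map_add_sub_map_le {s : Set ℝ} {f : ℝ → ℝ} (hf : ConcaveOn ℝ s f) {a b c : ℝ}
    (ha : a ∈ s) (hbc : b + c ∈ s) (hab : a ≤ b) (hc : 0 ≤ c) :
    f (b + c) - f b ≤ f (a + c) - f a := by
  rcases (add_nonneg (sub_nonneg.2 hab) hc).eq_or_lt with hL | hL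
  · obtain rfl : b = a := by linarith
    obtain rfl : c = 0 := by linarith
    simp
  set w := c / (b - a + c)
  have hw0 : 0 ≤ w := div_nonneg hc hL.le
  have hw1 : 0 ≤ 1 - w := by rw [sub_nonneg, div_le_one hL]; linarith
  -- `b` and `a + c` are the convex combinations of `a` and `b + c` with swapped weights
  have hb := hf.2 ha hbc hw0 hw1 (add_sub_cancel w 1)
  have hac := hf.2 ha hbc hw1 hw0 (sub_add_cancel 1 w)
  have eb : w * a + (1 - w) * (b + c) = b := by simp only [w]; field_simp; ring
  have eac : (1 - w) * a + w * (b + c) = a + c := by simp only [w]; field_simp; ring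
  simp only [smul_eq_mul, eb, eac] at hb hac
  linarith

namespace Real

lemma rpow_add_lt_add_rpow {α a b : ℝ} (hα0 : 0 < α) (hα1 : α < 1) (ha : 0 < a) (hb : 0 < b) :
    (a + b) ^ α < a ^ α + b ^ α := by
  have hab : 0 < a + b := by linarith
  have h1 : (a + b) ^ (α - 1) < a ^ (α - 1) := rpow_lt_rpow_of_neg ha (by linarith) (by linarith)
  have h2 : (a + b) ^ (α - 1) < b ^ (α - 1) := rpow_lt_rpow_of_neg hb (by linarith) (by linarith)
  have hsplit : ∀ t : ℝ, 0 < t → t ^ α = t * t ^ (α - 1) := fun t ht => by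
    rw [← rpow_one_add' ht.le (by linarith)]; ring_nf
  rw [hsplit _ hab, hsplit _ ha, hsplit _ hb]
  nlinarith

lemma abs_rpow_sub_rpow_le {α a b : ℝ} (hα0 : 0 ≤ α) (hα1 : α ≤ 1) (ha : 0 ≤ a) (hb : 0 ≤ b) :
    |a ^ α - b ^ α| ≤ |a - b| ^ α := by
  wlog hba : b ≤ a generalizing a b
  · rw [abs_sub_comm, abs_sub_comm a]
    exact this hb ha (le_of_not_ge hba)
  have hmono : b ^ α ≤ a ^ α := rpow_le_rpow hb hba hα0
  have hsub : a ^ α ≤ (a - b) ^ α + b ^ α := by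
    simpa using rpow_add_le_add_rpow (sub_nonneg.2 hba) hb hα0 hα1
  rw [abs_of_nonneg (sub_nonneg.2 hmono), abs_of_nonneg (sub_nonneg.2 hba)]
  linarith

lemma rpow_add_sub_rpow_mul_rpow_le {α r d D : ℝ} (hα0 : 0 ≤ α) (hα1 : α ≤ 1) (hr : 0 ≤ r)
    (hd : 0 < d) (hdD : d ≤ D) :
    ((r + d) ^ α - r ^ α) * D ^ α ≤ ((r + D) ^ α - r ^ α) * d ^ α := by
  set l := D / d
  have hl : 1 ≤ l := (one_le_div hd).2 hdD
  have hl0 : 0 ≤ l := zero_le_one.trans hl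
  have hD : D = l * d := (div_mul_cancel₀ D hd.ne').symm
  have hD0 : 0 ≤ D := hd.le.trans hdD
  have hinc := (concaveOn_rpow hα0 hα1).map_add_sub_map_le (mem_Ici.2 hr)
    (mem_Ici.2 (add_nonneg (mul_nonneg hl0 hr) hD0)) (le_mul_of_one_le_left hr hl) hD0
  have e1 : (l * r + D) ^ α = l ^ α * (r + d) ^ α := by
    rw [hD, ← mul_add, mul_rpow hl0 (by positivity)]
  have e2 : (l * r) ^ α = l ^ α * r ^ α := mul_rpow hl0 hr
  have e3 : D ^ α = l ^ α * d ^ α := by rw [hD, mul_rpow hl0 hd.le]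
  calc ((r + d) ^ α - r ^ α) * D ^ α = ((l * r + D) ^ α - (l * r) ^ α) * d ^ α := by
        rw [e1, e2, e3]; ring
    _ ≤ ((r + D) ^ α - r ^ α) * d ^ α := mul_le_mul_of_nonneg_right hinc (by positivity)

lemma min_rpow_add_sub_rpow_le {α r R d : ℝ} (hα0 : 0 ≤ α) (hα1 : α ≤ 1) (hr : 0 ≤ r)
    (hrR : r < R) (hd : 0 < d) :
    min ((r + d) ^ α) (R ^ α) - r ^ α ≤ (R ^ α - r ^ α) / (R - r) ^ α * d ^ α := by
  have hRr : 0 < (R - r) ^ α := rpow_pos_of_pos (by linarith) α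
  rw [div_mul_eq_mul_div, le_div_iff₀ hRr]
  rcases le_total d (R - r) with hdR | hdR
  · have := rpow_add_sub_rpow_mul_rpow_le hα0 hα1 hr hd hdR
    rw [add_sub_cancel] at this
    nlinarith [min_le_left ((r + d) ^ α) (R ^ α)]
  · have hrRα : r ^ α ≤ R ^ α := rpow_le_rpow hr hrR.le hα0
    have : (R - r) ^ α ≤ d ^ α := rpow_le_rpow (by linarith) hdR hα0
    nlinarith [min_le_right ((r + d) ^ α) (R ^ α)]

end Real

section HolderQuotients

variable {X : Type*} [MetricSpace X]

def holderQuotients (f : X → ℝ) (α : ℝ) (x : X) : Set ℝ :=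
  {q | ∃ y, y ≠ x ∧ q = (f y - f x) / dist y x ^ α}

lemma holderQuotients_subset_Iic {f : X → ℝ} {α K : ℝ} {x : X}
    (h : ∀ y, y ≠ x → f y - f x ≤ K * dist y x ^ α) : holderQuotients f α x ⊆ Iic K := by
  rintro _ ⟨y, hy, rfl⟩
  exact (div_le_iff₀ (Real.rpow_pos_of_pos (dist_pos.2 hy) α)).2 (h y hy)

lemma holderQuotients_subset_Ici {f : X → ℝ} {α K : ℝ} {x : X}
    (h : ∀ y, y ≠ x → K * dist y x ^ α ≤ f y - f x) : holderQuotients f α x ⊆ Ici K := by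
  rintro _ ⟨y, hy, rfl⟩
  exact (le_div_iff₀ (Real.rpow_pos_of_pos (dist_pos.2 hy) α)).2 (h y hy)

end HolderQuotients

section TruncCone

variable {X : Type*} [PseudoMetricSpace X]

noncomputable def truncCone (x₀ : X) (R α : ℝ) (y : X) : ℝ :=
  min (dist y x₀ ^ α) (R ^ α)

variable {x₀ x y : X} {R α : ℝ}

lemma truncCone_of_dist_le (hα0 : 0 ≤ α) (hx : dist x x₀ ≤ R) :
    truncCone x₀ R α x = dist x x₀ ^ α :=
  min_eq_left (Real.rpow_le_rpow dist_nonneg hx hα0)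

lemma abs_truncCone_sub_le (hα0 : 0 ≤ α) (hα1 : α ≤ 1) :
    |truncCone x₀ R α y - truncCone x₀ R α x| ≤ dist y x ^ α :=
  calc |truncCone x₀ R α y - truncCone x₀ R α x|
      ≤ max |dist y x₀ ^ α - dist x x₀ ^ α| |R ^ α - R ^ α| := abs_min_sub_min_le_max _ _ _ _
    _ = |dist y x₀ ^ α - dist x x₀ ^ α| := by simp
    _ ≤ |dist y x₀ - dist x x₀| ^ α := Real.abs_rpow_sub_rpow_le hα0 hα1 dist_nonneg dist_nonneg
    _ ≤ dist y x ^ α := Real.rpow_le_rpow (abs_nonneg _) (abs_dist_sub_le y x x₀) hα0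

lemma truncCone_sub_le (hα0 : 0 ≤ α) (hα1 : α ≤ 1) (hx : dist x x₀ < R) (hy : 0 < dist y x) :
    truncCone x₀ R α y - truncCone x₀ R α x ≤
      (R ^ α - dist x x₀ ^ α) / (R - dist x x₀) ^ α * dist y x ^ α := by
  have hcone : truncCone x₀ R α y ≤ min ((dist x x₀ + dist y x) ^ α) (R ^ α) :=
    min_le_min_right _ <| Real.rpow_le_rpow dist_nonneg
      ((dist_triangle y x x₀).trans_eq (add_comm _ _)) hα0
  rw [truncCone_of_dist_le hα0 hx.le]
  linarith [Real.min_rpow_add_sub_rpow_le hα0 hα1 dist_nonneg hx hy]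

end TruncCone

section TruncConeQuotients

variable {X : Type*} [MetricSpace X] {x₀ x : X} {R α : ℝ}

lemma neg_one_mem_holderQuotients_truncCone (hα0 : 0 < α) (hx : dist x x₀ ≤ R) (hxx : x ≠ x₀) :
    -1 ∈ holderQuotients (truncCone x₀ R α) α x := by
  have hr : 0 < dist x x₀ ^ α := Real.rpow_pos_of_pos (dist_pos.2 hxx) α
  refine ⟨x₀, hxx.symm, ?_⟩
  have hx₀ : dist x₀ x₀ ≤ R := by simpa using dist_nonneg.trans hx
  rw [truncCone_of_dist_le hα0.le hx, truncCone_of_dist_le hα0.le hx₀, dist_self,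
    Real.zero_rpow hα0.ne', dist_comm x₀ x, zero_sub, neg_div, div_self hr.ne']

lemma holderQuotients_truncCone_subset_Ici (hα0 : 0 ≤ α) (hα1 : α ≤ 1) :
    holderQuotients (truncCone x₀ R α) α x ⊆ Ici (-1) :=
  holderQuotients_subset_Ici fun _ _ => by
    rw [neg_one_mul]
    exact neg_le_of_abs_le (abs_truncCone_sub_le hα0 hα1)

lemma holderQuotients_truncCone_subset_Iic (hα0 : 0 ≤ α) (hα1 : α ≤ 1) (hx : dist x x₀ < R) :
    holderQuotients (truncCone x₀ R α) α x ⊆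
      Iic ((R ^ α - dist x x₀ ^ α) / (R - dist x x₀) ^ α) :=
  holderQuotients_subset_Iic fun _ hy => truncCone_sub_le hα0 hα1 hx (dist_pos.2 hy)

end TruncConeQuotients

theorem stmt_12_general (n : ℕ) (α R : ℝ) (hα0 : 0 < α) (hα1 : α < 1)
    (x₀ x : EuclideanSpace ℝ (Fin n)) (hx : dist x x₀ < R) (hxx : x ≠ x₀)
    (C : EuclideanSpace ℝ (Fin n) → ℝ)
    (hC : C = fun y => min (dist y x₀ ^ α) (R ^ α)) :
    sInf {q : ℝ | ∃ y, y ≠ x ∧ q = (C y - C x) / dist y x ^ α} ≤ -1 ∧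
    sSup {q : ℝ | ∃ y, y ≠ x ∧ q = (C y - C x) / dist y x ^ α} < 1 ∧
    sSup {q : ℝ | ∃ y, y ≠ x ∧ q = (C y - C x) / dist y x ^ α} +
      sInf {q : ℝ | ∃ y, y ≠ x ∧ q = (C y - C x) / dist y x ^ α} < 0 := by
  obtain rfl : C = truncCone x₀ R α := hC
  have hmem := neg_one_mem_holderQuotients_truncCone hα0 hx.le hxx
  have hK : (R ^ α - dist x x₀ ^ α) / (R - dist x x₀) ^ α < 1 := by
    rw [div_lt_one (Real.rpow_pos_of_pos (sub_pos.2 hx) α), sub_lt_iff_lt_add]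
    simpa using Real.rpow_add_lt_add_rpow hα0 hα1 (sub_pos.2 hx) (dist_pos.2 hxx)
  have hinf : sInf (holderQuotients (truncCone x₀ R α) α x) ≤ -1 :=
    csInf_le ⟨-1, holderQuotients_truncCone_subset_Ici hα0.le hα1.le⟩ hmem
  have hsup : sSup (holderQuotients (truncCone x₀ R α) α x) < 1 :=
    (csSup_le ⟨-1, hmem⟩ (holderQuotients_truncCone_subset_Iic hα0.le hα1.le hx)).trans_lt hK
  exact ⟨hinf, hsup, (add_lt_add_of_lt_of_le hsup hinf).trans_eq (add_neg_cancel 1)⟩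

/-- For the truncated `α`-cone `C(x) = min(|x - x₀|^α, R^α)` with `0 < α < 1` and every
`x ∈ B(x₀,R) \ {x₀}`: (i) `inf_{y≠x} (C(y) - C(x))/|y-x|^α ≤ -1`,
(ii) `sup_{y≠x} (C(y) - C(x))/|y-x|^α < 1`, hence their sum is strictly negative. -/
theorem stmt_12 (n : ℕ) (hn : 0 < n) (α R : ℝ) (hα0 : 0 < α) (hα1 : α < 1) (hR : 0 < R)
    (x₀ x : EuclideanSpace ℝ (Fin n)) (hx : dist x x₀ < R) (hxx : x ≠ x₀)
    (C : EuclideanSpace ℝ (Fin n) → ℝ)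
    (hC : C = fun y => min (dist y x₀ ^ α) (R ^ α)) :
    sInf {q : ℝ | ∃ y, y ≠ x ∧ q = (C y - C x) / dist y x ^ α} ≤ -1 ∧
    sSup {q : ℝ | ∃ y, y ≠ x ∧ q = (C y - C x) / dist y x ^ α} < 1 ∧
    sSup {q : ℝ | ∃ y, y ≠ x ∧ q = (C y - C x) / dist y x ^ α} +
      sInf {q : ℝ | ∃ y, y ≠ x ∧ q = (C y - C x) / dist y x ^ α} < 0 :=
  stmt_12_general n α R hα0 hα1 x₀ x hx hxx C hC
end

section
/- Let Ω ⊂ ℝⁿ be bounded open with inradius R = sup_{x∈Ω} δ(x), where δ(x) = dist(x, ℝⁿ\Ω). Let Γ = {x ∈ Ω : δ(x) = R} be the high ridge and ρ(x) = dist(x, Γ). For 0 < α ≤ 1 define u(x) = δ(x)^α / (δ(x)^α + ρ(x)^α) on Ω. Then for every x ∈ Ω \ Γ and every y ∈ ℝⁿ (with u extended by 0 outside Ω), (u(y) - u(x))/|y - x|^α ≤ 1/(δ(x)^α + ρ(x)^α), with equality attained when y is a closest point of Γ to x. -/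
open scoped Classical

/-!
Both `δ` and `ρ` are distance functions, hence 1-Lipschitz, and `t ↦ t ^ α` is subadditive
for `0 < α ≤ 1`; so `δ(y)^α ≤ δ(x)^α + |y - x|^α` and `ρ(x)^α ≤ ρ(y)^α + |y - x|^α`.
Since `a / (a + b)` increases in `a` and decreases in `b`, these two bounds give
`u(y) ≤ (δ(x)^α + |y - x|^α) / (δ(x)^α + ρ(x)^α)`, which is the estimate. At a closest
point `y ∈ Γ` we have `u(y) = 1` and `|y - x| = ρ(x)`, and the estimate becomes an identity.
-/

open Metric

lemma div_add_sub_div_add_le {a b A B D : ℝ} (ha : 0 ≤ a) (hb : 0 ≤ b)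
    (hAB : 0 < A + B) (haA : a ≤ A + D) (hBb : B ≤ b + D) :
    a / (a + b) - A / (A + B) ≤ D / (A + B) := by
  rcases (add_nonneg ha hb).eq_or_lt with hab | hab
  · rw [← hab, div_zero, zero_sub, ← neg_div]
    exact div_le_div_of_nonneg_right (by linarith) hAB.le
  · rw [sub_le_iff_le_add, ← add_div, div_le_div_iff₀ hab hAB]
    nlinarith [mul_nonneg ha (by linarith : 0 ≤ b + D - B),
      mul_nonneg hb (by linarith : 0 ≤ A + D - a)]

lemma div_le_one_div_of_le_div {t D c : ℝ} (hD : 0 ≤ D) (hc : 0 ≤ c) (h : t ≤ D / c) :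
    t / D ≤ 1 / c := by
  rcases hD.eq_or_lt with rfl | hD
  · simpa using hc
  · calc t / D ≤ D / c / D := div_le_div_of_nonneg_right h hD.le
      _ = 1 / c := by field_simp

section Holder

variable {X : Type*} [PseudoMetricSpace X] {α : ℝ}

lemma LipschitzWith.rpow_le_rpow_add_dist_rpow {f : X → ℝ} (hf : LipschitzWith 1 f)
    (hf0 : ∀ x, 0 ≤ f x) (hα0 : 0 ≤ α) (hα1 : α ≤ 1) (x y : X) :
    f y ^ α ≤ f x ^ α + dist y x ^ α :=
  calc f y ^ α ≤ (f x + dist y x) ^ α :=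
        Real.rpow_le_rpow (hf0 y) (by simpa using hf.le_add_mul y x) hα0
    _ ≤ f x ^ α + dist y x ^ α := Real.rpow_add_le_add_rpow (hf0 x) dist_nonneg hα0 hα1

lemma LipschitzWith.rpow_div_rpow_add_rpow_sub_le {f g : X → ℝ} (hf : LipschitzWith 1 f)
    (hg : LipschitzWith 1 g) (hf0 : ∀ x, 0 ≤ f x) (hg0 : ∀ x, 0 ≤ g x) (hα0 : 0 ≤ α)
    (hα1 : α ≤ 1) {x : X} (hx : 0 < f x ^ α + g x ^ α) (y : X) :
    f y ^ α / (f y ^ α + g y ^ α) - f x ^ α / (f x ^ α + g x ^ α) ≤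
      dist y x ^ α / (f x ^ α + g x ^ α) :=
  div_add_sub_div_add_le (Real.rpow_nonneg (hf0 y) α) (Real.rpow_nonneg (hg0 y) α)
    hx (hf.rpow_le_rpow_add_dist_rpow hf0 hα0 hα1 x y)
    (by simpa only [dist_comm] using hg.rpow_le_rpow_add_dist_rpow hg0 hα0 hα1 y x)

lemma LipschitzWith.ite_rpow_div_rpow_add_rpow_sub_le {s : Set X} {f g : X → ℝ}
    (hf : LipschitzWith 1 f) (hg : LipschitzWith 1 g) (hf0 : ∀ x, 0 ≤ f x)
    (hg0 : ∀ x, 0 ≤ g x) (hα0 : 0 ≤ α) (hα1 : α ≤ 1) {x : X} (hx : 0 < f x ^ α + g x ^ α)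
    (y : X) :
    (if y ∈ s then f y ^ α / (f y ^ α + g y ^ α) else 0) -
        f x ^ α / (f x ^ α + g x ^ α) ≤ dist y x ^ α / (f x ^ α + g x ^ α) := by
  split_ifs
  · exact hf.rpow_div_rpow_add_rpow_sub_le hg hf0 hg0 hα0 hα1 hx y
  · have hux : 0 ≤ f x ^ α / (f x ^ α + g x ^ α) :=
      div_nonneg (Real.rpow_nonneg (hf0 x) α) hx.le
    have hdist : 0 ≤ dist y x ^ α / (f x ^ α + g x ^ α) :=
      div_nonneg (Real.rpow_nonneg dist_nonneg α) hx.le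
    linarith

end Holder

lemma Metric.infDist_pos_of_subset_preimage_singleton {X Y : Type*} [PseudoMetricSpace X]
    [TopologicalSpace Y] [T1Space Y] {f : X → Y} (hf : Continuous f) {s : Set X}
    (hs : s.Nonempty) {c : Y} (hsf : s ⊆ f ⁻¹' {c}) {x : X} (hx : f x ≠ c) :
    0 < infDist x s :=
  (infDist_pos_iff_notMem_closure hs).1 fun hxs =>
    hx (closure_minimal hsf (isClosed_singleton.preimage hf) hxs)

theorem stmt_14_general (n : ℕ) (Ω : Set (EuclideanSpace ℝ (Fin n)))
    (hΩo : IsOpen Ω)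
    (α : ℝ) (hα0 : 0 < α) (hα1 : α ≤ 1)
    (δ : EuclideanSpace ℝ (Fin n) → ℝ) (hδ : δ = fun x => Metric.infDist x Ωᶜ)
    (R : ℝ)
    (Γ : Set (EuclideanSpace ℝ (Fin n))) (hΓ : Γ = {x ∈ Ω | δ x = R})
    (hΓne : Γ.Nonempty)
    (ρ : EuclideanSpace ℝ (Fin n) → ℝ) (hρ : ρ = fun x => Metric.infDist x Γ)
    (u : EuclideanSpace ℝ (Fin n) → ℝ)
    (hu : u = fun x => if x ∈ Ω then δ x ^ α / (δ x ^ α + ρ x ^ α) else 0) :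
    ∀ x ∈ Ω \ Γ,
      (∀ y, (u y - u x) / dist y x ^ α ≤ 1 / (δ x ^ α + ρ x ^ α)) ∧
      (∀ y ∈ Γ, dist x y = ρ x →
        (u y - u x) / dist y x ^ α = 1 / (δ x ^ α + ρ x ^ α)) := by
  rintro x ⟨hxΩ, hxΓ⟩
  have hδlip : LipschitzWith 1 δ := hδ ▸ lipschitz_infDist_pt _
  have hρlip : LipschitzWith 1 ρ := hρ ▸ lipschitz_infDist_pt _
  have hδ0 : ∀ z, 0 ≤ δ z := fun z => hδ ▸ infDist_nonneg
  have hρ0 : ∀ z, 0 ≤ ρ z := fun z => hρ ▸ infDist_nonneg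
  have hδxR : δ x ≠ R := fun h => hxΓ (hΓ ▸ ⟨hxΩ, h⟩)
  have hρx : 0 < ρ x := hρ ▸ infDist_pos_of_subset_preimage_singleton hδlip.continuous hΓne
    (hΓ ▸ fun z hz => hz.2) hδxR
  have hAB : 0 < δ x ^ α + ρ x ^ α :=
    add_pos_of_nonneg_of_pos (Real.rpow_nonneg (hδ0 x) α) (Real.rpow_pos_of_pos hρx α)
  have hux : u x = δ x ^ α / (δ x ^ α + ρ x ^ α) := by simp [hu, hxΩ]
  refine ⟨fun y => div_le_one_div_of_le_div (Real.rpow_nonneg dist_nonneg α) hAB.le ?_,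
    fun y hyΓ hxy => ?_⟩
  · rw [hux, hu]
    exact hδlip.ite_rpow_div_rpow_add_rpow_sub_le hρlip hδ0 hρ0 hα0.le hα1 hAB y
  · obtain ⟨hyΩ, hyR⟩ : y ∈ Ω ∧ δ y = R := by rwa [hΓ] at hyΓ
    have hΩc : Ωᶜ.Nonempty :=
      Set.nonempty_iff_ne_empty.2 fun h => hδxR (by simp [hδ, h, ← hyR])
    have hδy : 0 < δ y :=
      hδ ▸ (hΩo.isClosed_compl.notMem_iff_infDist_pos hΩc).1 (not_not.2 hyΩ)
    have hρy : ρ y = 0 := hρ ▸ infDist_zero_of_mem hyΓ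
    have huy : u y = 1 := by
      simp [hu, hyΩ, hρy, Real.zero_rpow hα0.ne', (Real.rpow_pos_of_pos hδy α).ne']
    have hB : ρ x ^ α ≠ 0 := (Real.rpow_pos_of_pos hρx α).ne'
    rw [huy, hux, dist_comm, hxy]
    field_simp
    ring

/-- Representation formula estimate: with `δ` the distance to the complement of `Ω`, `R` the
inradius, `Γ` the high ridge, `ρ` the distance to `Γ`, and
`u = δ^α/(δ^α + ρ^α)` on `Ω` (extended by `0` outside), for every `x ∈ Ω \ Γ` and every `y`:
`(u(y) - u(x))/|y - x|^α ≤ 1/(δ(x)^α + ρ(x)^α)`, with equality when `y` is a closest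
point of `Γ` to `x`. -/
theorem stmt_14 (n : ℕ) (Ω : Set (EuclideanSpace ℝ (Fin n)))
    (hΩo : IsOpen Ω) (hΩb : Bornology.IsBounded Ω) (hΩne : Ω.Nonempty)
    (α : ℝ) (hα0 : 0 < α) (hα1 : α ≤ 1)
    (δ : EuclideanSpace ℝ (Fin n) → ℝ) (hδ : δ = fun x => Metric.infDist x Ωᶜ)
    (R : ℝ) (hR : R = sSup (δ '' Ω))
    (Γ : Set (EuclideanSpace ℝ (Fin n))) (hΓ : Γ = {x ∈ Ω | δ x = R})
    (hΓne : Γ.Nonempty)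
    (ρ : EuclideanSpace ℝ (Fin n) → ℝ) (hρ : ρ = fun x => Metric.infDist x Γ)
    (u : EuclideanSpace ℝ (Fin n) → ℝ)
    (hu : u = fun x => if x ∈ Ω then δ x ^ α / (δ x ^ α + ρ x ^ α) else 0) :
    ∀ x ∈ Ω \ Γ,
      (∀ y, (u y - u x) / dist y x ^ α ≤ 1 / (δ x ^ α + ρ x ^ α)) ∧
      (∀ y ∈ Γ, dist x y = ρ x →
        (u y - u x) / dist y x ^ α = 1 / (δ x ^ α + ρ x ^ α)) :=
  stmt_14_general n Ω hΩo α hα0 hα1 δ hδ R Γ hΓ hΓne ρ hρ u hu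
end
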